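/- arXiv:1212.2943 — 3 statements merged into one kernel-verified Lean document; each statement's English description precedes it below -/
import Mathlib

section
/- For all m > 0 and t > 0, 0 ≤ ∫_{ℝ^d} ( exp(-(|ξ|² + (mt)^{2/α})^{α/2} + mt) - exp(-|ξ|^α) ) dξ ≤ e^{mt} (α/2) (mt)^{2/α} ∫_{ℝ^d} e^{-|ξ|^α} |ξ|^{α-2} dξ + (e^{mt} - 1) ∫_{ℝ^d} e^{-|ξ|^α} dξ, all integrals being finite since d ≥ 2. -/
/-!
Since `α / 2 ≤ 1`, the map `u ↦ u ^ (α / 2)` is subadditive on `[0, ∞)`, so with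
`a = (m t) ^ (2 / α)` one has `|ξ| ^ α ≤ (|ξ| ^ 2 + a) ^ (α / 2) ≤ |ξ| ^ α + m t`.
Hence the integrand lies between `0` and `(e ^ (m t) - 1) e ^ (-|ξ| ^ α)`, which gives both
bounds (the term with `|ξ| ^ (α - 2)` is nonnegative). In polar coordinates the integrability
of `e ^ (-|ξ| ^ α) |ξ| ^ s` reduces to that of `r ^ (d - 1 + s) e ^ (-r ^ α)` on `(0, ∞)`, a
Gamma integral, which converges for `d + s > 0`.
-/

open MeasureTheory Real Set

section RadialIntegrability

variable {E : Type*} [NormedAddCommGroup E] [NormedSpace ℝ E] [FiniteDimensional ℝ E]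
  [Nontrivial E] [MeasurableSpace E] [BorelSpace E] (μ : Measure E) [μ.IsAddHaarMeasure]

theorem integrable_exp_neg_norm_rpow_mul_norm_rpow {p s : ℝ} (hp : 0 < p)
    (hs : 0 < Module.finrank ℝ E + s) :
    Integrable (fun x : E => exp (-‖x‖ ^ p) * ‖x‖ ^ s) μ := by
  have hdim : 1 ≤ Module.finrank ℝ E := Module.finrank_pos
  rw [integrable_fun_norm_addHaar μ (f := fun y => exp (-y ^ p) * y ^ s)]
  refine (integrableOn_rpow_mul_exp_neg_rpow (s := (Module.finrank ℝ E - 1 : ℝ) + s)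
    (by linarith) hp).congr_fun (fun y (hy : 0 < y) => ?_) measurableSet_Ioi
  dsimp only
  rw [rpow_add hy, smul_eq_mul, ← rpow_natCast, Nat.cast_sub hdim, Nat.cast_one]
  ring

theorem integrable_exp_neg_norm_rpow {p : ℝ} (hp : 0 < p) :
    Integrable (fun x : E => exp (-‖x‖ ^ p)) μ := by
  simpa using integrable_exp_neg_norm_rpow_mul_norm_rpow μ hp (s := 0)
    (by simpa using Module.finrank_pos)

end RadialIntegrability

theorem rpow_le_sq_add_rpow_half {r c α : ℝ} (hr : 0 ≤ r) (hc : 0 ≤ c) (hα : 0 ≤ α) :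
    r ^ α ≤ (r ^ (2 : ℝ) + c) ^ (α / 2) := by
  calc r ^ α = (r ^ (2 : ℝ)) ^ (α / 2) := by rw [← rpow_mul hr]; ring_nf
    _ ≤ (r ^ (2 : ℝ) + c) ^ (α / 2) := by gcongr; linarith

theorem sq_add_rpow_half_le {r b α : ℝ} (hr : 0 ≤ r) (hb : 0 ≤ b) (hα₀ : 0 < α) (hα₂ : α ≤ 2) :
    (r ^ (2 : ℝ) + b ^ (2 / α)) ^ (α / 2) ≤ r ^ α + b := by
  calc (r ^ (2 : ℝ) + b ^ (2 / α)) ^ (α / 2)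
      ≤ (r ^ (2 : ℝ)) ^ (α / 2) + (b ^ (2 / α)) ^ (α / 2) :=
        rpow_add_le_add_rpow (by positivity) (by positivity) (by positivity) (by linarith)
    _ = r ^ α + b := by
        rw [← rpow_mul hr, ← rpow_mul hb, mul_div_cancel₀ _ two_ne_zero,
          show 2 / α * (α / 2) = 1 by field_simp, rpow_one]

theorem exp_neg_rpow_le_exp_neg_sq_add_rpow_half {r b α : ℝ} (hr : 0 ≤ r) (hb : 0 ≤ b)
    (hα₀ : 0 < α) (hα₂ : α ≤ 2) :
    exp (-r ^ α) ≤ exp (-(r ^ (2 : ℝ) + b ^ (2 / α)) ^ (α / 2) + b) := by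
  have := sq_add_rpow_half_le hr hb hα₀ hα₂
  gcongr
  linarith

theorem exp_neg_sq_add_rpow_half_le {r c α : ℝ} (b : ℝ) (hr : 0 ≤ r) (hc : 0 ≤ c) (hα : 0 ≤ α) :
    exp (-(r ^ (2 : ℝ) + c) ^ (α / 2) + b) ≤ exp b * exp (-r ^ α) := by
  have := rpow_le_sq_add_rpow_half hr hc hα
  rw [← exp_add, exp_le_exp]
  linarith

/-- For all `m > 0` and `t > 0`, the integral
`∫ (exp(-(|ξ|²+(mt)^{2/α})^{α/2} + mt) - exp(-|ξ|^α)) dξ` is nonnegative and bounded by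
`e^{mt} (α/2)(mt)^{2/α} ∫ e^{-|ξ|^α}|ξ|^{α-2} dξ + (e^{mt}-1) ∫ e^{-|ξ|^α} dξ`,
all the integrals being finite since `d ≥ 2`. -/
theorem integral_diff_exp_bounds (d : ℕ) (hd : 2 ≤ d) (α : ℝ) (hα₀ : 0 < α) (hα₂ : α < 2)
    (m t : ℝ) (hm : 0 < m) (ht : 0 < t) :
    Integrable (fun ξ : EuclideanSpace ℝ (Fin d) => Real.exp (-‖ξ‖ ^ α) * ‖ξ‖ ^ (α - 2))
      ∧ Integrable (fun ξ : EuclideanSpace ℝ (Fin d) => Real.exp (-‖ξ‖ ^ α))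
      ∧ Integrable (fun ξ : EuclideanSpace ℝ (Fin d) =>
          Real.exp (-((‖ξ‖ ^ (2 : ℝ) + (m * t) ^ ((2 : ℝ) / α)) ^ (α / 2)) + m * t)
            - Real.exp (-‖ξ‖ ^ α))
      ∧ 0 ≤ ∫ ξ : EuclideanSpace ℝ (Fin d),
            (Real.exp (-((‖ξ‖ ^ (2 : ℝ) + (m * t) ^ ((2 : ℝ) / α)) ^ (α / 2)) + m * t)
              - Real.exp (-‖ξ‖ ^ α))
      ∧ (∫ ξ : EuclideanSpace ℝ (Fin d),
            (Real.exp (-((‖ξ‖ ^ (2 : ℝ) + (m * t) ^ ((2 : ℝ) / α)) ^ (α / 2)) + m * t)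
              - Real.exp (-‖ξ‖ ^ α)))
          ≤ Real.exp (m * t) * (α / 2) * (m * t) ^ ((2 : ℝ) / α) *
              (∫ ξ : EuclideanSpace ℝ (Fin d), Real.exp (-‖ξ‖ ^ α) * ‖ξ‖ ^ (α - 2))
            + (Real.exp (m * t) - 1) *
              (∫ ξ : EuclideanSpace ℝ (Fin d), Real.exp (-‖ξ‖ ^ α)) := by
  have : Nonempty (Fin d) := ⟨⟨0, by omega⟩⟩
  have hmt : 0 ≤ m * t := by positivity
  have hd' : (2 : ℝ) ≤ d := by exact_mod_cast hd
  have hI₁ := integrable_exp_neg_norm_rpow_mul_norm_rpow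
    (volume : Measure (EuclideanSpace ℝ (Fin d))) hα₀ (s := α - 2)
    (by rw [finrank_euclideanSpace_fin]; linarith)
  have hI₂ := integrable_exp_neg_norm_rpow (volume : Measure (EuclideanSpace ℝ (Fin d))) hα₀
  have hlow (ξ : EuclideanSpace ℝ (Fin d)) :=
    exp_neg_rpow_le_exp_neg_sq_add_rpow_half (norm_nonneg ξ) hmt hα₀ hα₂.le
  have hup (ξ : EuclideanSpace ℝ (Fin d)) :=
    exp_neg_sq_add_rpow_half_le (m * t) (norm_nonneg ξ)
      (by positivity : 0 ≤ (m * t) ^ (2 / α)) hα₀.le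
  have hI₃ : Integrable (fun ξ : EuclideanSpace ℝ (Fin d) =>
      exp (-((‖ξ‖ ^ (2 : ℝ) + (m * t) ^ ((2 : ℝ) / α)) ^ (α / 2)) + m * t) - exp (-‖ξ‖ ^ α)) := by
    refine (hI₂.const_mul (exp (m * t) - 1)).mono' (by fun_prop) (.of_forall fun ξ => ?_)
    rw [norm_of_nonneg (sub_nonneg.2 (hlow ξ))]
    linarith [hup ξ]
  refine ⟨hI₁, hI₂, hI₃, integral_nonneg fun ξ => sub_nonneg.2 (hlow ξ), ?_⟩
  have hI₁_nonneg : 0 ≤ ∫ ξ : EuclideanSpace ℝ (Fin d), exp (-‖ξ‖ ^ α) * ‖ξ‖ ^ (α - 2) :=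
    integral_nonneg fun ξ => by positivity
  calc _ ≤ ∫ ξ : EuclideanSpace ℝ (Fin d), (exp (m * t) - 1) * exp (-‖ξ‖ ^ α) :=
        integral_mono hI₃ (hI₂.const_mul _) fun ξ => by linarith [hup ξ]
    _ ≤ _ := by
        rw [integral_const_mul]
        exact le_add_of_nonneg_left (by positivity)
end

section
/- Fix 0 < L < M < ∞. Then p^m(t,x) converges uniformly to p^0(t,x) on [L,M] × ℝ^d as m → 0⁺: for every ε > 0 there exists m₀ > 0 such that for all 0 < m ≤ m₀, all t ∈ [L,M] and all x ∈ ℝ^d, | p^m(t,x) - p^0(t,x) | < ε. -/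
open MeasureTheory Real Set

/-! The exponent `ψ_m(r) = (r² + m^{2/α})^{α/2} - m` satisfies `r^α - m ≤ ψ_m(r) ≤ r^α`, the upper
bound by subadditivity of `s ↦ s^{α/2}` (as `α ≤ 2`). Hence for `L ≤ t ≤ M` the Fourier integrands
of `p^m(t, ·)` and `p^0(t, ·)` differ by at most `(e^{Mm} - 1) e^{-L|ξ|^α}`, and integrating gives
`|p^m(t, x) - p^0(t, x)| ≤ (2π)^{-d} (e^{Mm} - 1) ∫ e^{-L|ξ|^α} dξ`, uniformly in `t` and `x`. -/

/-- The transition density `p^m(t,x)` of the relativistic `α`-stable process with mass `m`. -/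
noncomputable def relDensity (d : ℕ) (α m t : ℝ) (x : EuclideanSpace ℝ (Fin d)) : ℝ :=
  (2 * Real.pi) ^ (-(d : ℝ)) *
    (∫ ξ : EuclideanSpace ℝ (Fin d),
      Complex.exp (-(Complex.I * ((inner ℝ ξ x : ℝ) : ℂ)) -
        ((t * ((‖ξ‖ ^ (2 : ℝ) + m ^ ((2 : ℝ) / α)) ^ (α / 2) - m) : ℝ) : ℂ))).re

lemma integrable_exp_neg_mul_norm_rpow {E : Type*} [NormedAddCommGroup E] [NormedSpace ℝ E]
    [FiniteDimensional ℝ E] [MeasurableSpace E] [BorelSpace E] (μ : Measure E)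
    [μ.IsAddHaarMeasure] {b p : ℝ} (hb : 0 < b) (hp : 0 < p) :
    Integrable (fun x : E ↦ exp (-b * ‖x‖ ^ p)) μ := by
  obtain hE | hE := subsingleton_or_nontrivial E
  · exact Integrable.of_finite
  · rw [integrable_fun_norm_addHaar μ (f := fun y ↦ exp (-b * y ^ p))]
    refine (integrableOn_rpow_mul_exp_neg_mul_rpow (s := (Module.finrank ℝ E - 1 : ℕ))
      (neg_one_lt_zero.trans_le (Nat.cast_nonneg _)) hp hb).congr_fun (fun y _ ↦ by simp)
      measurableSet_Ioi

/-- The characteristic exponent `ψ_m(|ξ|)`, so that `p^m(t, ·)` is the inverse Fourier transform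
of `exp (-t ψ_m(|ξ|))`. -/
noncomputable def relExponent (α m r : ℝ) : ℝ := (r ^ (2 : ℝ) + m ^ ((2 : ℝ) / α)) ^ (α / 2) - m

section relExponent

variable {α m r : ℝ}

lemma rpow_two_rpow_div_two (α : ℝ) (hr : 0 ≤ r) : (r ^ (2 : ℝ)) ^ (α / 2) = r ^ α := by
  rw [← rpow_mul hr, mul_div_cancel₀ _ two_ne_zero]

lemma relExponent_zero (hα : α ≠ 0) (hr : 0 ≤ r) : relExponent α 0 r = r ^ α := by
  rw [relExponent, zero_rpow (div_ne_zero two_ne_zero hα), add_zero, sub_zero,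
    rpow_two_rpow_div_two α hr]

lemma rpow_sub_le_relExponent (hα : 0 ≤ α) (hm : 0 ≤ m) (hr : 0 ≤ r) :
    r ^ α - m ≤ relExponent α m r := by
  rw [relExponent, ← rpow_two_rpow_div_two α hr]
  gcongr
  exact le_add_of_nonneg_right (rpow_nonneg hm _)

lemma relExponent_le_rpow (hα₀ : 0 < α) (hα₂ : α ≤ 2) (hm : 0 ≤ m) (hr : 0 ≤ r) :
    relExponent α m r ≤ r ^ α := by
  have hm' : (m ^ ((2 : ℝ) / α)) ^ (α / 2) = m := by
    rw [← rpow_mul hm, show 2 / α * (α / 2) = 1 by field_simp, rpow_one]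
  calc relExponent α m r ≤ (r ^ (2 : ℝ)) ^ (α / 2) + (m ^ ((2 : ℝ) / α)) ^ (α / 2) - m := by
        rw [relExponent]
        gcongr
        exact rpow_add_le_add_rpow (by positivity) (by positivity) (by positivity) (by linarith)
    _ = r ^ α := by rw [hm', rpow_two_rpow_div_two α hr]; ring

end relExponent

lemma abs_exp_neg_sub_exp_neg_le {a b c : ℝ} (hab : a ≤ b) (hba : b - c ≤ a) :
    |exp (-a) - exp (-b)| ≤ (exp c - 1) * exp (-b) := by
  have hexp : exp (-a) ≤ exp c * exp (-b) := by
    rw [← exp_add]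
    exact exp_le_exp.2 (by linarith)
  rw [abs_of_nonneg (sub_nonneg.2 (exp_le_exp.2 (neg_le_neg hab)))]
  linarith

section relIntegrand

variable {E : Type*} [NormedAddCommGroup E] [InnerProductSpace ℝ E] {α m t : ℝ}

noncomputable def relIntegrand (α m t : ℝ) (x ξ : E) : ℂ :=
  Complex.exp (-(Complex.I * ((inner ℝ ξ x : ℝ) : ℂ)) - ((t * relExponent α m ‖ξ‖ : ℝ) : ℂ))

lemma relDensity_eq (d : ℕ) (α m t : ℝ) (x : EuclideanSpace ℝ (Fin d)) :
    relDensity d α m t x = (2 * π) ^ (-(d : ℝ)) * (∫ ξ, relIntegrand α m t x ξ).re :=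
  rfl

lemma relIntegrand_eq (α m t : ℝ) (x ξ : E) :
    relIntegrand α m t x ξ =
      Complex.exp ((-inner ℝ ξ x : ℝ) * Complex.I) *
        (exp (-(t * relExponent α m ‖ξ‖)) : ℝ) := by
  rw [relIntegrand, Complex.ofReal_exp, ← Complex.exp_add]
  push_cast
  ring_nf

lemma norm_relIntegrand (α m t : ℝ) (x ξ : E) :
    ‖relIntegrand α m t x ξ‖ = exp (-(t * relExponent α m ‖ξ‖)) := by
  rw [relIntegrand_eq, norm_mul, Complex.norm_exp_ofReal_mul_I, one_mul, Complex.norm_real,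
    norm_of_nonneg (exp_pos _).le]

lemma norm_relIntegrand_sub (α m m' t : ℝ) (x ξ : E) :
    ‖relIntegrand α m t x ξ - relIntegrand α m' t x ξ‖ =
      |exp (-(t * relExponent α m ‖ξ‖)) - exp (-(t * relExponent α m' ‖ξ‖))| := by
  rw [relIntegrand_eq, relIntegrand_eq, ← mul_sub, norm_mul, Complex.norm_exp_ofReal_mul_I,
    one_mul, ← Complex.ofReal_sub, Complex.norm_real, norm_eq_abs]

lemma measurable_relIntegrand (α m t : ℝ) (x : E) [MeasurableSpace E] [BorelSpace E] :
    Measurable (relIntegrand α m t x) := by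
  unfold relIntegrand relExponent
  fun_prop

lemma integrable_relIntegrand [FiniteDimensional ℝ E] [MeasurableSpace E] [BorelSpace E]
    (μ : Measure E) [μ.IsAddHaarMeasure] (hα : 0 < α) (hm : 0 ≤ m) (ht : 0 < t) (x : E) :
    Integrable (relIntegrand α m t x) μ := by
  refine ((integrable_exp_neg_mul_norm_rpow μ ht hα).const_mul (exp (t * m))).mono'
    (measurable_relIntegrand α m t x).aestronglyMeasurable (.of_forall fun ξ ↦ ?_)
  have hψ := rpow_sub_le_relExponent hα.le hm (norm_nonneg ξ)
  rw [norm_relIntegrand, ← exp_add]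
  exact exp_le_exp.2 (by nlinarith)

lemma norm_relIntegrand_sub_relIntegrand_zero_le {L M : ℝ} (hα₀ : 0 < α) (hα₂ : α ≤ 2)
    (hm : 0 ≤ m) (hL : 0 ≤ L) (ht : t ∈ Icc L M) (x ξ : E) :
    ‖relIntegrand α m t x ξ - relIntegrand α 0 t x ξ‖ ≤
      (exp (M * m) - 1) * exp (-L * ‖ξ‖ ^ α) := by
  have ht₀ : 0 ≤ t := hL.trans ht.1
  have hr : 0 ≤ ‖ξ‖ ^ α := rpow_nonneg (norm_nonneg ξ) α
  rw [norm_relIntegrand_sub, relExponent_zero hα₀.ne' (norm_nonneg ξ)]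
  calc _ ≤ (exp (t * m) - 1) * exp (-(t * ‖ξ‖ ^ α)) := by
        refine abs_exp_neg_sub_exp_neg_le ?_ ?_
        · exact mul_le_mul_of_nonneg_left (relExponent_le_rpow hα₀ hα₂ hm (norm_nonneg ξ)) ht₀
        · nlinarith [rpow_sub_le_relExponent hα₀.le hm (norm_nonneg ξ)]
    _ ≤ (exp (M * m) - 1) * exp (-L * ‖ξ‖ ^ α) := by
        gcongr
        · exact sub_nonneg.2 (one_le_exp (mul_nonneg (ht₀.trans ht.2) hm))
        · exact ht.2
        · nlinarith [ht.1]

end relIntegrand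

lemma abs_relDensity_sub_relDensity_zero_le {d : ℕ} {α m t L M : ℝ} (hα₀ : 0 < α)
    (hα₂ : α ≤ 2) (hm : 0 ≤ m) (hL : 0 < L) (ht : t ∈ Icc L M) (x : EuclideanSpace ℝ (Fin d)) :
    |relDensity d α m t x - relDensity d α 0 t x| ≤
      (2 * π) ^ (-(d : ℝ)) *
        ((exp (M * m) - 1) * ∫ ξ : EuclideanSpace ℝ (Fin d), exp (-L * ‖ξ‖ ^ α)) := by
  have ht₀ : 0 < t := hL.trans_le ht.1
  rw [relDensity_eq, relDensity_eq, ← mul_sub, ← Complex.sub_re,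
    ← integral_sub (integrable_relIntegrand _ hα₀ hm ht₀ x)
      (integrable_relIntegrand _ hα₀ le_rfl ht₀ x), abs_mul, abs_of_pos (by positivity),
    ← integral_const_mul]
  gcongr
  calc _ ≤ ‖∫ ξ, (relIntegrand α m t x ξ - relIntegrand α 0 t x ξ)‖ := Complex.abs_re_le_norm _
    _ ≤ ∫ ξ, ‖relIntegrand α m t x ξ - relIntegrand α 0 t x ξ‖ := norm_integral_le_integral_norm _
    _ ≤ _ := integral_mono_of_nonneg (.of_forall fun _ ↦ norm_nonneg _)
        ((integrable_exp_neg_mul_norm_rpow _ hL hα₀).const_mul _)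
        (.of_forall (norm_relIntegrand_sub_relIntegrand_zero_le hα₀ hα₂ hm hL.le ht x))

theorem relDensity_unif_conv_general (d : ℕ) (α : ℝ) (hα₀ : 0 < α) (hα₂ : α < 2)
    (L M : ℝ) (hL : 0 < L) :
    ∀ ε > 0, ∃ m₀ > 0, ∀ m : ℝ, 0 < m → m ≤ m₀ →
      ∀ t ∈ Set.Icc L M, ∀ x : EuclideanSpace ℝ (Fin d),
        |relDensity d α m t x - relDensity d α 0 t x| < ε := by
  intro ε hε
  set C := ∫ ξ : EuclideanSpace ℝ (Fin d), exp (-L * ‖ξ‖ ^ α)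
  have hbound : Filter.Tendsto (fun m ↦ (2 * π) ^ (-(d : ℝ)) * ((exp (M * m) - 1) * C))
      (nhds 0) (nhds 0) := by
    have : Continuous fun m ↦ (2 * π) ^ (-(d : ℝ)) * ((exp (M * m) - 1) * C) := by fun_prop
    simpa using this.tendsto 0
  obtain ⟨δ, hδ, hsmall⟩ := Metric.eventually_nhds_iff.1 (hbound.eventually (gt_mem_nhds hε))
  refine ⟨δ / 2, half_pos hδ, fun m hm hmδ t ht x ↦ ?_⟩
  refine (abs_relDensity_sub_relDensity_zero_le hα₀ hα₂.le hm.le hL ht x).trans_lt (hsmall ?_)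
  rw [dist_zero_right, norm_of_nonneg hm.le]
  linarith

/-- `p^m(t,x)` converges uniformly to `p^0(t,x)` on `[L,M] × ℝ^d` as `m → 0⁺`. -/
theorem relDensity_unif_conv (d : ℕ) (hd : 2 ≤ d) (α : ℝ) (hα₀ : 0 < α) (hα₂ : α < 2)
    (L M : ℝ) (hL : 0 < L) (hLM : L < M) :
    ∀ ε > 0, ∃ m₀ > 0, ∀ m : ℝ, 0 < m → m ≤ m₀ →
      ∀ t ∈ Set.Icc L M, ∀ x : EuclideanSpace ℝ (Fin d),
        |relDensity d α m t x - relDensity d α 0 t x| < ε :=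
  relDensity_unif_conv_general d α hα₀ hα₂ L M hL
end

section
/- Let D be a bounded open set in ℝ^d (d ≥ 2) satisfying the uniform interior and exterior ball conditions with radius r₀ > 0 (equivalently, D is a bounded C^{1,1} open set). Then for every 0 ≤ q < r₀, ((r₀ - q)/r₀)^{d-1} |∂D| ≤ |∂D_q| ≤ (r₀/(r₀ - q))^{d-1} |∂D|. -/
/-!
The uniform ball condition provides at every boundary point `z` an outward unit normal `ν z`
such that the balls of radius `r₀` centred at `z ∓ r₀ ν z` lie in `D` and outside `closure D`.
Since the interior ball at `z` and the exterior ball at `w` are disjoint, the parallelogram law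
makes `ν` a `1/r₀`-Lipschitz map on `∂D`. The boundary of `D_q` is the image of `∂D` under
`Φ z = z - q ν z`: a point at distance `q` from `Dᶜ` lies `q` along the inner normal of a
nearest boundary point. By the Lipschitz bound on `ν`, `Φ` distorts distances by a factor
between `1 - q/r₀` and `1 + q/r₀ ≤ r₀/(r₀ - q)`, and `H^{d-1}` changes at most by the
`(d-1)`-th power of these factors.
-/

open MeasureTheory Real Set Metric

/-- `D` satisfies the uniform interior and exterior ball conditions with radius `r₀`:
for every boundary point `z` there are balls of radius `r₀` tangent at `z`, one inside `D`
and one inside the complement of the closure of `D`. -/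
def UniformBallCondition {d : ℕ} (D : Set (EuclideanSpace ℝ (Fin d))) (r₀ : ℝ) : Prop :=
  ∀ z ∈ frontier D, ∃ x₀ y₀ : EuclideanSpace ℝ (Fin d),
    x₀ ∈ D ∧ y₀ ∈ (closure D)ᶜ ∧ dist x₀ z = r₀ ∧ dist y₀ z = r₀ ∧
      Metric.ball x₀ r₀ ⊆ D ∧ Metric.ball y₀ r₀ ⊆ (closure D)ᶜ

open Topology
open scoped NNReal ENNReal

theorem le_hausdorffMeasure_image_of_dist_le_mul {X Y : Type*} [MetricSpace X]
    [MeasurableSpace X] [BorelSpace X] [MetricSpace Y] [MeasurableSpace Y] [BorelSpace Y]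
    {f : X → Y} {s : Set X} {K : ℝ≥0} (hf : ∀ x ∈ s, ∀ y ∈ s, dist x y ≤ K * dist (f x) (f y))
    {d : ℝ} (hd : 0 ≤ d) :
    μH[d] s ≤ (K : ℝ≥0∞) ^ d * μH[d] (f '' s) := by
  rcases s.eq_empty_or_nonempty with rfl | ⟨x₀, -⟩
  · simp
  have : Nonempty X := ⟨x₀⟩
  have hg : LipschitzOnWith K (Function.invFunOn f s) (f '' s) := by
    refine LipschitzOnWith.of_dist_le_mul ?_
    rintro _ ⟨x, hx, rfl⟩ _ ⟨y, hy, rfl⟩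
    simpa only [Function.invFunOn_apply_eq hx, Function.invFunOn_apply_eq hy] using
      hf _ (Function.invFunOn_apply_mem (f := f) hx) _ (Function.invFunOn_apply_mem (f := f) hy)
  have hs : s ⊆ Function.invFunOn f s '' (f '' s) := by
    intro x hx
    refine ⟨f x, mem_image_of_mem f hx, dist_le_zero.1 ?_⟩
    simpa only [Function.invFunOn_apply_eq hx, dist_self, mul_zero] using
      hf _ (Function.invFunOn_apply_mem (f := f) hx) _ hx
  exact (measure_mono hs).trans (hg.hausdorffMeasure_image_le hd)

theorem ENNReal.toReal_le_coe_mul_toReal {a b : ℝ≥0∞} {c : ℝ≥0} (hab : a ≤ c * b)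
    (hba : b ≤ c * a) : a.toReal ≤ c * b.toReal := by
  rcases eq_or_ne b ⊤ with rfl | hb
  · have ha : a = ⊤ := by
      contrapose! hba
      exact ENNReal.mul_lt_top ENNReal.coe_lt_top hba.lt_top
    simp [ha]
  · simpa using ENNReal.toReal_mono (ENNReal.mul_ne_top ENNReal.coe_ne_top hb) hab

section MetricSpace

variable {X : Type*} [PseudoMetricSpace X]

theorem le_infDist_compl_of_ball_subset {s : Set X} {x : X}
    {t : ℝ} (hs : sᶜ.Nonempty) (h : ball x t ⊆ s) : t ≤ infDist x sᶜ :=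
  (le_infDist hs).2 fun _ hy => not_lt.1 fun hlt => hy (h (mem_ball'.2 hlt))

def innerParallelSet (D : Set X) (q : ℝ) : Set X :=
  {x ∈ D | q < infDist x Dᶜ}

theorem IsOpen.innerParallelSet {D : Set X} (hD : IsOpen D) (q : ℝ) :
    IsOpen (innerParallelSet D q) :=
  hD.inter (isOpen_lt continuous_const (continuous_infDist_pt _))

end MetricSpace

section NormedSpace

variable {E : Type*} [NormedAddCommGroup E] [NormedSpace ℝ E]

theorem exists_mem_frontier_infDist_compl_eq_dist_of_mem_closure [FiniteDimensional ℝ E]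
    {s : Set E} {x : E} (hx : x ∈ closure s) (hs : s ≠ univ) :
    ∃ y ∈ frontier s, infDist x sᶜ = dist x y := by
  by_cases hxs : x ∈ s
  · exact exists_mem_frontier_infDist_compl_eq_dist hxs hs
  · exact ⟨x, ⟨hx, fun h => hxs (interior_subset h)⟩, by rw [infDist_zero_of_mem hxs, dist_self]⟩

theorem eq_sub_smul_of_disjoint_ball [StrictConvexSpace ℝ E] {w z n : E} {q r : ℝ}
    (hn : ‖n‖ = 1) (hr : 0 < r) (hwz : dist w z = q)
    (hdisj : Disjoint (ball w q) (ball (z + r • n) r)) : w = z - q • n := by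
  rcases (dist_nonneg.trans_eq hwz).eq_or_lt with rfl | hq
  · simpa using hwz.symm
  have hzy : ‖z - (z + r • n)‖ = r := by simp [norm_smul, hn, hr.le]
  have hadd : ‖(w - z) + (z - (z + r • n))‖ = ‖w - z‖ + ‖z - (z + r • n)‖ := by
    refine le_antisymm (norm_add_le _ _) ?_
    rw [sub_add_sub_cancel, hzy, ← dist_eq_norm, ← dist_eq_norm, hwz]
    exact (disjoint_ball_ball_iff hq hr).1 hdisj
  have hray := (sameRay_iff_norm_add.2 hadd).norm_smul_eq
  rw [← dist_eq_norm, hwz, hzy] at hray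
  refine smul_right_injective E hr.ne' ?_
  linear_combination (norm := module) -hray

def IsBallNormal (D : Set E) (r : ℝ) (ν : E → E) : Prop :=
  ∀ z ∈ frontier D, ‖ν z‖ = 1 ∧ ball (z - r • ν z) r ⊆ D ∧ ball (z + r • ν z) r ⊆ (closure D)ᶜ

namespace IsBallNormal

variable {D : Set E} {r q : ℝ} {ν : E → E} {z w : E}

theorem disjoint_ball (hν : IsBallNormal D r ν) {s : Set E} (hs : s ⊆ D) (hz : z ∈ frontier D) :
    Disjoint s (ball (z + r • ν z) r) :=
  Disjoint.mono (hs.trans subset_closure) (hν z hz).2.2 disjoint_compl_right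

theorem sub_smul_mem_frontier_innerParallelSet (hν : IsBallNormal D r ν) (hD : IsOpen D)
    (hz : z ∈ frontier D) (hq₀ : 0 ≤ q) (hq : q < r) :
    z - q • ν z ∈ frontier (innerParallelSet D q) := by
  obtain ⟨hn, hi, -⟩ := hν z hz
  have hzD : z ∉ D := (hD.frontier_eq ▸ hz).2
  have hdist : dist (z - q • ν z) z = q := by simp [norm_smul, hn, abs_of_nonneg hq₀]
  rw [(hD.innerParallelSet q).frontier_eq]
  refine ⟨mem_closure_of_tendsto (f := fun t : ℝ => z - t • ν z) (b := 𝓝[>] q) ?_ ?_, ?_⟩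
  · exact ((continuous_const.sub (continuous_id.smul continuous_const)).tendsto q).mono_left
      nhdsWithin_le_nhds
  · filter_upwards [Ioo_mem_nhdsGT hq] with t ht
    have ht₀ : 0 < t := hq₀.trans_lt ht.1
    have hball : ball (z - t • ν z) t ⊆ D := by
      refine (ball_subset_ball' ?_).trans hi
      simp [dist_eq_norm, ← sub_smul, norm_smul, hn, abs_of_pos (sub_pos.2 ht.2)]
    exact ⟨hball (mem_ball_self ht₀),
      ht.1.trans_le (le_infDist_compl_of_ball_subset ⟨z, hzD⟩ hball)⟩
  · rintro ⟨-, hlt⟩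
    exact (hlt.trans_le ((infDist_le_dist_of_mem hzD).trans_eq hdist)).false

theorem exists_sub_smul_eq_of_mem_frontier_innerParallelSet [StrictConvexSpace ℝ E]
    [FiniteDimensional ℝ E] (hν : IsBallNormal D r ν) (hr : 0 < r) (hD : IsOpen D)
    (hq₀ : 0 ≤ q) (hw : w ∈ frontier (innerParallelSet D q)) :
    ∃ z ∈ frontier D, z - q • ν z = w := by
  rw [(hD.innerParallelSet q).frontier_eq] at hw
  obtain ⟨hwcl, hwq⟩ := hw
  have hge : q ≤ infDist w Dᶜ :=
    closure_lt_subset_le continuous_const (continuous_infDist_pt _)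
      (closure_mono (fun x hx => hx.2) hwcl)
  have hle : infDist w Dᶜ ≤ q := by
    refine not_lt.1 fun hlt => hwq ⟨by_contra fun hwD => ?_, hlt⟩
    rw [infDist_zero_of_mem hwD] at hlt
    exact hlt.not_ge hq₀
  have hDne : D ≠ univ := by
    rintro rfl
    simp [innerParallelSet, hq₀.not_gt] at hwcl
  obtain ⟨z, hz, hwz⟩ :=
    exists_mem_frontier_infDist_compl_eq_dist_of_mem_closure (closure_mono (fun x hx => hx.1) hwcl)
      hDne
  have hball : ball w q ⊆ D := le_antisymm hle hge ▸ ball_infDist_compl_subset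
  exact ⟨z, hz, (eq_sub_smul_of_disjoint_ball (hν z hz).1 hr (hwz.symm.trans (le_antisymm hle hge))
    (hν.disjoint_ball hball hz)).symm⟩

theorem frontier_innerParallelSet [StrictConvexSpace ℝ E] [FiniteDimensional ℝ E]
    (hν : IsBallNormal D r ν) (hr : 0 < r) (hD : IsOpen D) (hq₀ : 0 ≤ q) (hq : q < r) :
    frontier (innerParallelSet D q) = (fun z => z - q • ν z) '' frontier D :=
  Subset.antisymm
    (fun _ hw => hν.exists_sub_smul_eq_of_mem_frontier_innerParallelSet hr hD hq₀ hw)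
    (image_subset_iff.2 fun _ hz => hν.sub_smul_mem_frontier_innerParallelSet hD hz hq₀ hq)

end IsBallNormal

end NormedSpace

theorem UniformBallCondition.exists_isBallNormal {d : ℕ} {D : Set (EuclideanSpace ℝ (Fin d))}
    {r : ℝ} (h : UniformBallCondition D r) (hr : 0 < r) : ∃ ν, IsBallNormal D r ν := by
  choose! x₀ y₀ _ _ hx₀ hy₀ hx₀D hy₀D using h
  refine ⟨fun z => r⁻¹ • (y₀ z - z), fun z hz => ?_⟩
  have hn : ‖r⁻¹ • (y₀ z - z)‖ = 1 := by
    rw [norm_smul, ← dist_eq_norm, hy₀ z hz, norm_inv, norm_of_nonneg hr.le, inv_mul_cancel₀ hr.ne']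
  have hy : z + r • r⁻¹ • (y₀ z - z) = y₀ z := by
    rw [smul_inv_smul₀ hr.ne']
    abel
  have hdisj : Disjoint (ball (x₀ z) r) (ball (z + r • r⁻¹ • (y₀ z - z)) r) := by
    rw [hy]
    exact Disjoint.mono ((hx₀D z hz).trans subset_closure) (hy₀D z hz) disjoint_compl_right
  have hx := eq_sub_smul_of_disjoint_ball hn hr (hx₀ z hz) hdisj
  exact ⟨hn, hx ▸ hx₀D z hz, hy ▸ hy₀D z hz⟩

section InnerProductSpace

variable {F : Type*} [NormedAddCommGroup F] [InnerProductSpace ℝ F]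

theorem mul_norm_sub_le_of_two_mul_le_norm_add_sub {a m n : F} {r : ℝ} (hr : 0 ≤ r)
    (hm : ‖m‖ = 1) (hn : ‖n‖ = 1) (hadd : 2 * r ≤ ‖a + r • (m + n)‖)
    (hsub : 2 * r ≤ ‖a - r • (m + n)‖) : r * ‖m - n‖ ≤ ‖a‖ := by
  have hpar₁ := parallelogram_law_with_norm ℝ a (r • (m + n))
  have hpar₂ := parallelogram_law_with_norm ℝ m n
  rw [norm_smul, norm_of_nonneg hr] at hpar₁
  rw [hm, hn] at hpar₂
  have hsq₁ := pow_le_pow_left₀ (by positivity) hadd 2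
  have hsq₂ := pow_le_pow_left₀ (by positivity) hsub 2
  refine le_of_pow_le_pow_left₀ two_ne_zero (norm_nonneg a) ?_
  nlinarith

namespace IsBallNormal

variable {D : Set F} {r q : ℝ} {ν : F → F} {z w : F}

theorem mul_dist_le (hν : IsBallNormal D r ν) (hr : 0 < r) (hz : z ∈ frontier D)
    (hw : w ∈ frontier D) : r * dist (ν z) (ν w) ≤ dist z w := by
  obtain ⟨hnz, hiz, -⟩ := hν z hz
  obtain ⟨hnw, hiw, -⟩ := hν w hw
  have h₁ := (disjoint_ball_ball_iff hr hr).1 (hν.disjoint_ball hiw hz)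
  have h₂ := (disjoint_ball_ball_iff hr hr).1 (hν.disjoint_ball hiz hw)
  rw [dist_eq_norm] at h₁ h₂
  rw [dist_eq_norm, dist_eq_norm]
  refine mul_norm_sub_le_of_two_mul_le_norm_add_sub hr.le hnz hnw ?_ ?_
  · have : w - r • ν w - (z + r • ν z) = -(z - w + r • (ν z + ν w)) := by module
    rwa [this, norm_neg, ← two_mul] at h₁
  · have : z - r • ν z - (w + r • ν w) = z - w - r • (ν z + ν w) := by module
    rwa [this, ← two_mul] at h₂

theorem abs_dist_sub_smul_sub_dist_le (hν : IsBallNormal D r ν) (hr : 0 < r) (hq : 0 ≤ q)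
    (hz : z ∈ frontier D) (hw : w ∈ frontier D) :
    |dist (z - q • ν z) (w - q • ν w) - dist z w| ≤ q / r * dist z w := by
  have hν' : q * dist (ν z) (ν w) ≤ q / r * dist z w := by
    rw [div_mul_eq_mul_div, le_div_iff₀ hr]
    nlinarith [hν.mul_dist_le hr hz hw]
  have h₁ := dist_sub_sub_le z (q • ν z) w (q • ν w)
  have h₂ := dist_add_add_le (z - q • ν z) (q • ν z) (w - q • ν w) (q • ν w)
  rw [sub_add_cancel, sub_add_cancel] at h₂
  rw [dist_smul₀, norm_of_nonneg hq] at h₁ h₂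
  exact abs_sub_le_iff.2 ⟨by linarith, by linarith⟩

theorem lipschitzOnWith_sub_smul (hν : IsBallNormal D r ν) (hr : 0 < r) (hq₀ : 0 ≤ q)
    (hq : q < r) :
    LipschitzOnWith (r / (r - q)).toNNReal (fun z => z - q • ν z) (frontier D) := by
  refine LipschitzOnWith.of_dist_le_mul fun z hz w hw => ?_
  have hfactor : 1 + q / r ≤ r / (r - q) := by
    rw [le_div_iff₀ (sub_pos.2 hq)]
    field_simp
    nlinarith
  have hdist := (abs_sub_le_iff.1 (hν.abs_dist_sub_smul_sub_dist_le hr hq₀ hz hw)).1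
  rw [Real.coe_toNNReal _ (div_nonneg hr.le (sub_nonneg.2 hq.le))]
  calc dist (z - q • ν z) (w - q • ν w) ≤ (1 + q / r) * dist z w := by linarith
    _ ≤ r / (r - q) * dist z w := by gcongr

theorem dist_le_mul_dist_sub_smul (hν : IsBallNormal D r ν) (hr : 0 < r) (hq₀ : 0 ≤ q)
    (hq : q < r) (hz : z ∈ frontier D) (hw : w ∈ frontier D) :
    dist z w ≤ (r / (r - q)).toNNReal * dist (z - q • ν z) (w - q • ν w) := by
  have hdist := (abs_sub_le_iff.1 (hν.abs_dist_sub_smul_sub_dist_le hr hq₀ hz hw)).2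
  rw [div_mul_eq_mul_div, le_div_iff₀ hr] at hdist
  rw [Real.coe_toNNReal _ (div_nonneg hr.le (sub_nonneg.2 hq.le)), div_mul_eq_mul_div,
    le_div_iff₀ (sub_pos.2 hq)]
  linarith

end IsBallNormal

end InnerProductSpace

theorem surface_measure_parallel_set_bounds_general (d : ℕ) (hd : 2 ≤ d)
    (D : Set (EuclideanSpace ℝ (Fin d))) (hopen : IsOpen D)
    (r₀ : ℝ) (hr₀ : 0 < r₀)
    (hball : UniformBallCondition D r₀) (q : ℝ) (hq0 : 0 ≤ q) (hq : q < r₀) :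
    ((r₀ - q) / r₀) ^ (d - 1) * (μH[(d : ℝ) - 1] (frontier D)).toReal
        ≤ (μH[(d : ℝ) - 1] (frontier {x ∈ D | q < Metric.infDist x Dᶜ})).toReal
      ∧ (μH[(d : ℝ) - 1] (frontier {x ∈ D | q < Metric.infDist x Dᶜ})).toReal
          ≤ (r₀ / (r₀ - q)) ^ (d - 1) * (μH[(d : ℝ) - 1] (frontier D)).toReal := by
  obtain ⟨ν, hν⟩ := hball.exists_isBallNormal hr₀
  obtain ⟨n, rfl⟩ : ∃ n, d = n + 1 := ⟨d - 1, by omega⟩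
  have hfrontier : frontier {x ∈ D | q < infDist x Dᶜ} = (fun z => z - q • ν z) '' frontier D :=
    hν.frontier_innerParallelSet hr₀ hopen hq0 hq
  set K := (r₀ / (r₀ - q)).toNNReal
  have hK : ((K ^ n : ℝ≥0) : ℝ) = (r₀ / (r₀ - q)) ^ n := by
    rw [NNReal.coe_pow, Real.coe_toNNReal _ (div_nonneg hr₀.le (sub_nonneg.2 hq.le))]
  have hupper : μH[n] ((fun z => z - q • ν z) '' frontier D) ≤ ↑(K ^ n) * μH[n] (frontier D) := by
    simpa [ENNReal.rpow_natCast] using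
      (hν.lipschitzOnWith_sub_smul hr₀ hq0 hq).hausdorffMeasure_image_le n.cast_nonneg
  have hlower : μH[n] (frontier D) ≤ ↑(K ^ n) * μH[n] ((fun z => z - q • ν z) '' frontier D) := by
    simpa [ENNReal.rpow_natCast] using le_hausdorffMeasure_image_of_dist_le_mul
      (fun z hz w hw => hν.dist_le_mul_dist_sub_smul hr₀ hq0 hq hz hw) n.cast_nonneg
  have h₁ := ENNReal.toReal_le_coe_mul_toReal hupper hlower
  have h₂ := ENNReal.toReal_le_coe_mul_toReal hlower hupper
  rw [hK] at h₁ h₂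
  simp only [Nat.add_sub_cancel, Nat.cast_add, Nat.cast_one, add_sub_cancel_right, hfrontier]
  refine ⟨?_, h₁⟩
  rwa [← inv_div, inv_pow, inv_mul_le_iff₀ (by positivity)]

/-- For a bounded `C^{1,1}` open set (uniform interior/exterior ball radius `r₀`) and
`0 ≤ q < r₀`, `((r₀-q)/r₀)^{d-1}|∂D| ≤ |∂D_q| ≤ (r₀/(r₀-q))^{d-1}|∂D|`,
where `D_q = {x ∈ D : δ_D(x) > q}`. -/
theorem surface_measure_parallel_set_bounds (d : ℕ) (hd : 2 ≤ d)
    (D : Set (EuclideanSpace ℝ (Fin d))) (hopen : IsOpen D)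
    (hbdd : Bornology.IsBounded D) (r₀ : ℝ) (hr₀ : 0 < r₀)
    (hball : UniformBallCondition D r₀) (q : ℝ) (hq0 : 0 ≤ q) (hq : q < r₀) :
    ((r₀ - q) / r₀) ^ (d - 1) * (μH[(d : ℝ) - 1] (frontier D)).toReal
        ≤ (μH[(d : ℝ) - 1] (frontier {x ∈ D | q < Metric.infDist x Dᶜ})).toReal
      ∧ (μH[(d : ℝ) - 1] (frontier {x ∈ D | q < Metric.infDist x Dᶜ})).toReal
          ≤ (r₀ / (r₀ - q)) ^ (d - 1) * (μH[(d : ℝ) - 1] (frontier D)).toReal :=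
  surface_measure_parallel_set_bounds_general d hd D hopen r₀ hr₀ hball q hq0 hq
end
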